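/- arXiv:2209.10217 — 2 statements merged into one kernel-verified Lean document; each statement's English description precedes it below -/
import Mathlib

section
/- In ℝ², let ρ_1 = ½(δ_{(0,1)} + δ_{(0,−1)}), and for ε ∈ ℝ let x_ε = (1, ε/2) and ρ_2^ε = ½(δ_{x_ε} + δ_{−x_ε}); define P_ε = ½(δ_{ρ_1} + δ_{ρ_2^ε}) as a probability measure on the space of probability measures on a closed ball Ω ⊂ ℝ² containing all these points. Then for all 0 < ε ≤ ½: any Wasserstein barycenters μ_{P_ε} of P_ε and μ_{P_{−ε}} of P_{−ε} satisfy W₂(μ_{P_ε}, μ_{P_{−ε}}) = 1, while 𝒲₁(P_ε, P_{−ε}) ≤ ε. -/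
/-!
Write `σ x = ½(δ_x + δ_{-x})`, so that `ρ₁ = σ a` and `ρ₂^{±ε} = σ e±` with `a = (0, 1)` and
`e± = (±1, ε/2)`; note `⟪a, e±⟫ = ε/2 > 0`. Whenever `0 < ⟪a, e⟫`, the barycenter of
`½(δ_{σ a} + δ_{σ e})` is `σ m`, `m` the midpoint of `a` and `e`. Weak duality with potentials
`0` and `y ↦ min ‖±a - y‖²` bounds the variance of `μ` below by `¼ ∫ g dμ`, where by Apollonius
`g y = min ‖±a - y‖² + min ‖±e - y‖² ≥ ‖a - e‖²/2`, with equality only at `±m`; so a barycenter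
lives on `{m, -m}`, and step potentials force equal masses there. Flipping the sign of `ε` moves
`m` from `(1/2, ·)` to `(-1/2, ·)`: the barycenters are `1` apart, while `ρ₂^ε` and `ρ₂^{-ε}`
are only `ε` apart.
-/

noncomputable section

open MeasureTheory Metric Set
open scoped ENNReal NNReal RealInnerProductSpace

/-- The set of transport plans (couplings) between two measures. -/
def Couplings {α β : Type*} [MeasurableSpace α] [MeasurableSpace β]
    (ρ : Measure α) (μ : Measure β) : Set (Measure (α × β)) :=
  {γ | γ.map Prod.fst = ρ ∧ γ.map Prod.snd = μ}

/-- The 2-Wasserstein distance between two measures on a normed space. -/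
def W2 {α : Type*} [MeasurableSpace α] [NormedAddCommGroup α] (ρ μ : Measure α) : ℝ :=
  Real.sqrt (sInf ((fun γ : Measure (α × α) => ∫ p, ‖p.1 - p.2‖ ^ 2 ∂γ) '' Couplings ρ μ))

/-- The 1-Wasserstein distance between measures on the space of measures,
with ground cost `W2`. -/
def Wc1 {α : Type*} [MeasurableSpace α] [NormedAddCommGroup α]
    (P Q : Measure (Measure α)) : ℝ :=
  sInf ((fun γ : Measure (Measure α × Measure α) => ∫ p, W2 p.1 p.2 ∂γ) '' Couplings P Q)

/-- The variance functional `F_P`. -/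
def Fvar {α : Type*} [MeasurableSpace α] [NormedAddCommGroup α]
    (P : Measure (Measure α)) (μ : Measure α) : ℝ :=
  (1 / 2) * ∫ ρ, W2 ρ μ ^ 2 ∂P

abbrev Euc (d : ℕ) : Type := EuclideanSpace ℝ (Fin d)

/-- `ρ` is a Borel probability measure concentrated on `Ω`. -/
def ProbOn {d : ℕ} (Ω : Set (Euc d)) (ρ : Measure (Euc d)) : Prop :=
  IsProbabilityMeasure ρ ∧ ρ Ωᶜ = 0

/-- `P` is a Borel probability measure on the probability measures over `Ω`. -/
def PProbOn {d : ℕ} (Ω : Set (Euc d)) (P : Measure (Measure (Euc d))) : Prop :=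
  IsProbabilityMeasure P ∧ P {ρ | ¬ ProbOn Ω ρ} = 0

/-- `μ` is a Wasserstein barycenter of `P` (a minimizer of `Fvar P` over `P(Ω)`). -/
def IsBary {d : ℕ} (Ω : Set (Euc d)) (P : Measure (Measure (Euc d)))
    (μ : Measure (Euc d)) : Prop :=
  ProbOn Ω μ ∧ ∀ ν, ProbOn Ω ν → Fvar P μ ≤ Fvar P ν

/-- The point `(a, b) ∈ ℝ²`. -/
def pt (a b : ℝ) : Euc 2 := (EuclideanSpace.equiv (Fin 2) ℝ).symm ![a, b]

/-- `ρ₁ = ½(δ_{(0,1)} + δ_{(0,-1)})`. -/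
def rho1 : Measure (Euc 2) :=
  (2 : ℝ≥0∞)⁻¹ • (Measure.dirac (pt 0 1) + Measure.dirac (pt 0 (-1)))

/-- `ρ₂^ε = ½(δ_{x_ε} + δ_{-x_ε})` with `x_ε = (1, ε/2)`. -/
def rho2 (ε : ℝ) : Measure (Euc 2) :=
  (2 : ℝ≥0∞)⁻¹ • (Measure.dirac (pt 1 (ε / 2)) + Measure.dirac (pt (-1) (-(ε / 2))))

/-- `P_ε = ½(δ_{ρ₁} + δ_{ρ₂^ε})`. -/
def Pm (ε : ℝ) : Measure (Measure (Euc 2)) :=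
  (2 : ℝ≥0∞)⁻¹ • (Measure.dirac rho1 + Measure.dirac (rho2 ε))

namespace MeasureTheory.Measure

variable {α : Type*} [MeasurableSpace α]

def twoPoint (x y : α) : Measure α := (2 : ℝ≥0∞)⁻¹ • (dirac x + dirac y)

instance (x y : α) : IsProbabilityMeasure (twoPoint x y) := by
  constructor
  simp [twoPoint, ENNReal.inv_two_add_inv_two]

theorem twoPoint_comm (x y : α) : twoPoint x y = twoPoint y x := by
  rw [twoPoint, add_comm, twoPoint]

theorem ae_eq_dirac_of_measurableSet {a : α} (ha : MeasurableSet {a}) (f : α → ℝ) :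
    f =ᵐ[dirac a] fun _ => f a := by
  filter_upwards [(mem_ae_dirac_iff ha).2 rfl] with x hx
  rw [Set.mem_singleton_iff.1 hx]

theorem integral_twoPoint {x y : α} (hx : MeasurableSet {x}) (hy : MeasurableSet {y})
    (f : α → ℝ) : ∫ z, f z ∂twoPoint x y = (f x + f y) / 2 := by
  have hfx := ae_eq_dirac_of_measurableSet hx f
  have hfy := ae_eq_dirac_of_measurableSet hy f
  rw [twoPoint, integral_smul_measure, integral_add_measure
    ((integrable_const _).congr hfx.symm) ((integrable_const _).congr hfy.symm),
    integral_congr_ae hfx, integral_congr_ae hfy]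
  simp only [ENNReal.toReal_inv, ENNReal.toReal_ofNat, integral_const, probReal_univ, smul_eq_mul,
    one_mul]
  ring

theorem twoPoint_apply_self [MeasurableSingletonClass α] {x y : α} (hxy : x ≠ y) :
    twoPoint x y {x} = 2⁻¹ := by
  simp [twoPoint, hxy.symm]

theorem ae_twoPoint [MeasurableSingletonClass α] (x y : α) :
    ∀ᵐ z ∂twoPoint x y, z = x ∨ z = y := by
  simp [twoPoint]

theorem twoPoint_mem_couplings {β : Type*} [MeasurableSpace β] (x₁ x₂ : α) (y₁ y₂ : β) :
    twoPoint (x₁, y₁) (x₂, y₂) ∈ Couplings (twoPoint x₁ x₂) (twoPoint y₁ y₂) := by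
  constructor <;>
  simp [twoPoint, Measure.map_smul, Measure.map_add _ _ measurable_fst,
      Measure.map_add _ _ measurable_snd, Measure.map_dirac' measurable_fst,
      Measure.map_dirac' measurable_snd]

theorem measurableSet_singleton_of_isFiniteMeasure [MeasurableSpace.CountablyGenerated α]
    (ρ : Measure α) [IsFiniteMeasure ρ] : MeasurableSet {ρ} := by
  set G := MeasurableSpace.countableGeneratingSet α
  -- finite intersections of generators; `⋂₀ ∅ = univ` keeps the total mass in the π-system
  set C : Set (Set α) := Set.sInter '' {F | F.Finite ∧ F ⊆ G}
  have hC : C.Countable :=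
    (Set.countable_ofPred_finite_subset MeasurableSpace.countable_countableGeneratingSet).image _
  have hCm : ∀ s ∈ C, MeasurableSet s := by
    rintro _ ⟨F, ⟨hF, hFG⟩, rfl⟩
    exact .sInter hF.countable fun t ht =>
      MeasurableSpace.measurableSet_countableGeneratingSet (hFG ht)
  have hgen : ‹MeasurableSpace α› = MeasurableSpace.generateFrom C := by
    refine le_antisymm ?_ (MeasurableSpace.generateFrom_le hCm)
    conv_lhs => rw [← MeasurableSpace.generateFrom_countableGeneratingSet (α := α)]
    refine MeasurableSpace.generateFrom_le fun s hs => MeasurableSpace.measurableSet_generateFrom ?_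
    exact ⟨{s}, ⟨Set.finite_singleton s, Set.singleton_subset_iff.2 hs⟩, Set.sInter_singleton s⟩
  have hπ : IsPiSystem C := by
    rintro _ ⟨F, ⟨hF, hFG⟩, rfl⟩ _ ⟨F', ⟨hF', hF'G⟩, rfl⟩ -
    exact ⟨F ∪ F', ⟨hF.union hF', Set.union_subset hFG hF'G⟩, Set.sInter_union F F'⟩
  have huniv : Set.univ ∈ C := ⟨∅, ⟨Set.finite_empty, Set.empty_subset G⟩, Set.sInter_empty⟩
  have hρ : {ρ} = ⋂ s ∈ C, {μ : Measure α | μ s = ρ s} := by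
    refine Set.Subset.antisymm (by rintro μ rfl; exact Set.mem_iInter₂.2 fun s _ => rfl)
      fun μ hμ => ?_
    have hμρ : ∀ s ∈ C, μ s = ρ s := fun s hs => Set.mem_iInter₂.1 hμ s hs
    have : IsFiniteMeasure μ := ⟨by rw [hμρ _ huniv]; exact measure_lt_top ρ _⟩
    exact ext_of_generate_finite C hgen hπ hμρ (hμρ _ huniv)
  rw [hρ]
  exact .biInter hC fun s hs => measurable_coe (hCm s hs) (measurableSet_singleton _)

variable [MeasurableSingletonClass α] {μ : Measure α} {p q : α}

theorem integrable_of_ae_eq_or_eq [IsFiniteMeasure μ] (hpq : p ≠ q)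
    (hμ : ∀ᵐ y ∂μ, y = p ∨ y = q) (f : α → ℝ) : Integrable f μ := by
  rw [(ae_eq_or_eq_iff_eq_dirac_add_dirac hpq).1 hμ]
  exact ((integrable_dirac enorm_lt_top).smul_measure (measure_ne_top _ _)).add_measure
    ((integrable_dirac enorm_lt_top).smul_measure (measure_ne_top _ _))

theorem integral_of_ae_eq_or_eq [IsFiniteMeasure μ] (hpq : p ≠ q)
    (hμ : ∀ᵐ y ∂μ, y = p ∨ y = q) (f : α → ℝ) :
    ∫ y, f y ∂μ = μ.real {p} * f p + μ.real {q} * f q := by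
  have hμ' := (ae_eq_or_eq_iff_eq_dirac_add_dirac hpq).1 hμ
  have hint : ∀ x, Integrable f (μ {x} • dirac x) := fun x =>
    (integrable_dirac enorm_lt_top).smul_measure (measure_ne_top _ _)
  conv_lhs => rw [hμ']
  rw [integral_add_measure (hint p) (hint q), integral_smul_measure, integral_smul_measure,
    integral_dirac, integral_dirac]
  simp only [smul_eq_mul, measureReal_def]

theorem measureReal_add_measureReal_of_ae_eq_or_eq [IsProbabilityMeasure μ] (hpq : p ≠ q)
    (hμ : ∀ᵐ y ∂μ, y = p ∨ y = q) : μ.real {p} + μ.real {q} = 1 := by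
  simpa using (integral_of_ae_eq_or_eq hpq hμ fun _ => (1 : ℝ)).symm

theorem eq_twoPoint_of_ae_eq_or_eq [IsProbabilityMeasure μ] (hpq : p ≠ q)
    (hμ : ∀ᵐ y ∂μ, y = p ∨ y = q) (hp : μ.real {p} = 1 / 2) : μ = twoPoint p q := by
  have hq : μ.real {q} = 1 / 2 := by
    linarith [measureReal_add_measureReal_of_ae_eq_or_eq hpq hμ]
  have half : ∀ {s : Set α}, μ.real s = 1 / 2 → μ s = 2⁻¹ := fun h => by
    rw [← ENNReal.ofReal_toReal (measure_ne_top μ _), ← measureReal_def, h, one_div,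
      ENNReal.ofReal_inv_of_pos two_pos, ENNReal.ofReal_ofNat]
  rw [(ae_eq_or_eq_iff_eq_dirac_add_dirac hpq).1 hμ, half hp, half hq, twoPoint, smul_add]

end MeasureTheory.Measure

open Measure

theorem Continuous.integrable_of_ae_mem_isCompact {X : Type*} [TopologicalSpace X] [T2Space X]
    [MeasurableSpace X] [OpensMeasurableSpace X] {μ : Measure X} [IsFiniteMeasure μ]
    {K : Set X} (hK : IsCompact K) (hμ : ∀ᵐ x ∂μ, x ∈ K) {f : X → ℝ} (hf : Continuous f) :
    Integrable f μ := by
  simpa [IntegrableOn, Measure.restrict_eq_self_of_ae_mem hμ] using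
    hf.continuousOn.integrableOn_compact (μ := μ) hK

section Couplings

variable {α β : Type*} [MeasurableSpace α] [MeasurableSpace β]

theorem isProbabilityMeasure_of_mem_couplings {ρ : Measure α} {μ : Measure β}
    [IsProbabilityMeasure ρ] {γ : Measure (α × β)} (hγ : γ ∈ Couplings ρ μ) :
    IsProbabilityMeasure γ :=
  have : IsProbabilityMeasure (γ.map Prod.fst) := hγ.1 ▸ ‹_›
  isProbabilityMeasure_of_map Prod.fst

theorem prod_mem_couplings (ρ : Measure α) (μ : Measure β) [IsProbabilityMeasure ρ]
    [IsProbabilityMeasure μ] : ρ.prod μ ∈ Couplings ρ μ := by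
  simp [Couplings]

end Couplings

section Wasserstein

variable {E : Type*} [NormedAddCommGroup E] [MeasurableSpace E]

theorem W2_nonneg (ρ μ : Measure E) : 0 ≤ W2 ρ μ := Real.sqrt_nonneg _

theorem bddBelow_transportCost (ρ μ : Measure E) :
    BddBelow ((fun γ : Measure (E × E) => ∫ p, ‖p.1 - p.2‖ ^ 2 ∂γ) '' Couplings ρ μ) :=
  ⟨0, by rintro _ ⟨γ, -, rfl⟩; positivity⟩

theorem W2_sq (ρ μ : Measure E) :
    W2 ρ μ ^ 2 = sInf ((fun γ : Measure (E × E) => ∫ p, ‖p.1 - p.2‖ ^ 2 ∂γ) '' Couplings ρ μ) :=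
  Real.sq_sqrt (Real.sInf_nonneg (by rintro _ ⟨γ, -, rfl⟩; positivity))

theorem W2_sq_le_integral {ρ μ : Measure E} {γ : Measure (E × E)} (hγ : γ ∈ Couplings ρ μ) :
    W2 ρ μ ^ 2 ≤ ∫ p, ‖p.1 - p.2‖ ^ 2 ∂γ := by
  rw [W2_sq]
  exact csInf_le (bddBelow_transportCost ρ μ) ⟨γ, hγ, rfl⟩

theorem le_W2_sq {ρ μ : Measure E} [IsProbabilityMeasure ρ] [IsProbabilityMeasure μ] {c : ℝ}
    (h : ∀ γ ∈ Couplings ρ μ, c ≤ ∫ p, ‖p.1 - p.2‖ ^ 2 ∂γ) : c ≤ W2 ρ μ ^ 2 := by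
  rw [W2_sq]
  exact le_csInf ⟨_, _, prod_mem_couplings ρ μ, rfl⟩ (by rintro _ ⟨γ, hγ, rfl⟩; exact h γ hγ)

theorem W2_sq_twoPoint_le [MeasurableSingletonClass E] (x₁ x₂ y₁ y₂ : E) :
    W2 (twoPoint x₁ x₂) (twoPoint y₁ y₂) ^ 2 ≤ (‖x₁ - y₁‖ ^ 2 + ‖x₂ - y₂‖ ^ 2) / 2 :=
  (W2_sq_le_integral (twoPoint_mem_couplings x₁ x₂ y₁ y₂)).trans_eq
    (integral_twoPoint (measurableSet_singleton _) (measurableSet_singleton _) _)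

variable [BorelSpace E] [SecondCountableTopology E]

/-- Weak Kantorovich duality. -/
theorem integral_add_integral_le_W2_sq {ρ μ : Measure E} [IsProbabilityMeasure ρ]
    [IsProbabilityMeasure μ] {S T : Set E} (hS : IsCompact S) (hT : IsCompact T)
    (hρ : ∀ᵐ x ∂ρ, x ∈ S) (hμ : ∀ᵐ y ∂μ, y ∈ T) {φ ψ : E → ℝ} (hφ : Integrable φ ρ)
    (hψ : Integrable ψ μ) (h : ∀ x ∈ S, ∀ y ∈ T, φ x + ψ y ≤ ‖x - y‖ ^ 2) :
    ∫ x, φ x ∂ρ + ∫ y, ψ y ∂μ ≤ W2 ρ μ ^ 2 := by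
  refine le_W2_sq fun γ hγ => ?_
  have := isProbabilityMeasure_of_mem_couplings hγ
  obtain ⟨rfl, rfl⟩ := hγ
  have hST : ∀ᵐ p ∂γ, p ∈ S ×ˢ T := by
    filter_upwards [ae_of_ae_map measurable_fst.aemeasurable hρ,
      ae_of_ae_map measurable_snd.aemeasurable hμ] with p hp₁ hp₂ using ⟨hp₁, hp₂⟩
  have hφ' : Integrable (fun p : E × E => φ p.1) γ := hφ.comp_measurable measurable_fst
  have hψ' : Integrable (fun p : E × E => ψ p.2) γ := hψ.comp_measurable measurable_snd
  rw [integral_map measurable_fst.aemeasurable hφ.aestronglyMeasurable,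
    integral_map measurable_snd.aemeasurable hψ.aestronglyMeasurable, ← integral_add hφ' hψ']
  refine integral_mono_ae (hφ'.add hψ')
    (((continuous_fst.sub continuous_snd).norm.pow 2).integrable_of_ae_mem_isCompact
      (hS.prod hT) hST) ?_
  filter_upwards [hST] with p hp using h _ hp.1 _ hp.2

theorem Fvar_twoPoint {α : Type*} [MeasurableSpace α] [MeasurableSpace.CountablyGenerated α]
    [NormedAddCommGroup α] (ρ ρ' : Measure α) [IsFiniteMeasure ρ] [IsFiniteMeasure ρ']
    (ν : Measure α) : Fvar (twoPoint ρ ρ') ν = (W2 ρ ν ^ 2 + W2 ρ' ν ^ 2) / 4 := by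
  rw [Fvar, integral_twoPoint (measurableSet_singleton_of_isFiniteMeasure ρ)
    (measurableSet_singleton_of_isFiniteMeasure ρ')]
  ring

theorem Wc1_twoPoint_le {α : Type*} [MeasurableSpace α] [MeasurableSpace.CountablyGenerated α]
    [NormedAddCommGroup α] (ρ₁ ρ₂ ρ₁' ρ₂' : Measure α) [IsFiniteMeasure ρ₁] [IsFiniteMeasure ρ₂]
    [IsFiniteMeasure ρ₁'] [IsFiniteMeasure ρ₂'] :
    Wc1 (twoPoint ρ₁ ρ₂) (twoPoint ρ₁' ρ₂') ≤ (W2 ρ₁ ρ₁' + W2 ρ₂ ρ₂') / 2 := by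
  have hsingleton : ∀ (ρ ρ' : Measure α) [IsFiniteMeasure ρ] [IsFiniteMeasure ρ'],
      MeasurableSet {(ρ, ρ')} := fun ρ ρ' _ _ => by
    rw [← Set.singleton_prod_singleton]
    exact (measurableSet_singleton_of_isFiniteMeasure ρ).prod
      (measurableSet_singleton_of_isFiniteMeasure ρ')
  calc Wc1 (twoPoint ρ₁ ρ₂) (twoPoint ρ₁' ρ₂')
      ≤ ∫ p, W2 p.1 p.2 ∂twoPoint (ρ₁, ρ₁') (ρ₂, ρ₂') :=
        csInf_le ⟨0, by rintro _ ⟨γ, -, rfl⟩; exact integral_nonneg fun p => W2_nonneg _ _⟩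
          ⟨_, twoPoint_mem_couplings ρ₁ ρ₂ ρ₁' ρ₂', rfl⟩
    _ = (W2 ρ₁ ρ₁' + W2 ρ₂ ρ₂') / 2 :=
        integral_twoPoint (hsingleton ρ₁ ρ₁') (hsingleton ρ₂ ρ₂') _

end Wasserstein

section InnerProduct

variable {E : Type*} [NormedAddCommGroup E] [InnerProductSpace ℝ E]

theorem ne_neg_of_inner_pos {x y : E} (h : 0 < ⟪x, y⟫) : y ≠ -y := fun hy => by
  have := congrArg (⟪x, ·⟫) hy
  simp only [inner_neg_right] at this
  linarith

theorem inner_midpoint_pos_left {a e : E} (hae : 0 < ⟪a, e⟫) : 0 < ⟪a, midpoint ℝ a e⟫ := by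
  rw [midpoint_eq_smul_add, inner_smul_right, inner_add_right, real_inner_self_eq_norm_sq]
  exact mul_pos (by norm_num) (by positivity)

theorem inner_midpoint_pos_right {a e : E} (hae : 0 < ⟪a, e⟫) : 0 < ⟪e, midpoint ℝ a e⟫ := by
  rw [midpoint_comm]
  exact inner_midpoint_pos_left (by rwa [real_inner_comm])

theorem norm_sub_sq_add_norm_sub_sq (u v y : E) :
    ‖u - y‖ ^ 2 + ‖v - y‖ ^ 2 = 2 * ‖y - midpoint ℝ u v‖ ^ 2 + ‖u - v‖ ^ 2 / 2 := by
  have h := EuclideanGeometry.dist_sq_add_dist_sq_eq_two_mul_dist_midpoint_sq_add_half_dist_sq y u v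
  rw [dist_comm y u, dist_comm y v] at h
  simp only [dist_eq_norm] at h
  linarith

theorem norm_sub_midpoint_sq_add_norm_sub_midpoint_sq (a e : E) :
    ‖a - midpoint ℝ a e‖ ^ 2 + ‖e - midpoint ℝ a e‖ ^ 2 = ‖a - e‖ ^ 2 / 2 := by
  rw [norm_sub_sq_add_norm_sub_sq, sub_self, norm_zero]
  ring

theorem half_norm_sub_sq_add_le_min_add_min (a e y : E) :
    ‖a - e‖ ^ 2 / 2 + 2 * min (min (‖y - midpoint ℝ a e‖ ^ 2) (‖y + midpoint ℝ a e‖ ^ 2)) ⟪a, e⟫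
      ≤ min (‖a - y‖ ^ 2) (‖-a - y‖ ^ 2) + min (‖e - y‖ ^ 2) (‖-e - y‖ ^ 2) := by
  have hneg : midpoint ℝ (-a) (-e) = -midpoint ℝ a e := by
    simp only [midpoint_eq_smul_add, ← neg_add, smul_neg]
  have hmixed : ‖a - -e‖ ^ 2 = ‖a - e‖ ^ 2 + 4 * ⟪a, e⟫ := by
    rw [sub_neg_eq_add, norm_add_sq_real, norm_sub_sq_real]
    ring
  have hmixed' : ‖-a - e‖ ^ 2 = ‖a - e‖ ^ 2 + 4 * ⟪a, e⟫ := by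
    rw [← neg_add', norm_neg, norm_add_sq_real, norm_sub_sq_real]
    ring
  have hmin₁ := min_le_left (min (‖y - midpoint ℝ a e‖ ^ 2) (‖y + midpoint ℝ a e‖ ^ 2)) ⟪a, e⟫
  have hmin₂ := min_le_right (min (‖y - midpoint ℝ a e‖ ^ 2) (‖y + midpoint ℝ a e‖ ^ 2)) ⟪a, e⟫
  have hmin₃ := min_le_left (‖y - midpoint ℝ a e‖ ^ 2) (‖y + midpoint ℝ a e‖ ^ 2)
  have hmin₄ := min_le_right (‖y - midpoint ℝ a e‖ ^ 2) (‖y + midpoint ℝ a e‖ ^ 2)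
  rcases min_choice (‖a - y‖ ^ 2) (‖-a - y‖ ^ 2) with h₁ | h₁ <;>
  rcases min_choice (‖e - y‖ ^ 2) (‖-e - y‖ ^ 2) with h₂ | h₂ <;> rw [h₁, h₂]
  · linarith [norm_sub_sq_add_norm_sub_sq a e y]
  · linarith [norm_sub_sq_add_norm_sub_sq a (-e) y, sq_nonneg ‖y - midpoint ℝ a (-e)‖]
  · linarith [norm_sub_sq_add_norm_sub_sq (-a) e y, sq_nonneg ‖y - midpoint ℝ (-a) e‖]
  · have h := norm_sub_sq_add_norm_sub_sq (-a) (-e) y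
    rw [hneg, sub_neg_eq_add, neg_sub_neg, norm_sub_rev e a] at h
    linarith

theorem eq_midpoint_or_eq_neg_of_min_add_min_le {a e y : E} (hae : 0 < ⟪a, e⟫)
    (h : min (‖a - y‖ ^ 2) (‖-a - y‖ ^ 2) + min (‖e - y‖ ^ 2) (‖-e - y‖ ^ 2) ≤ ‖a - e‖ ^ 2 / 2) :
    y = midpoint ℝ a e ∨ y = -midpoint ℝ a e := by
  have hmin : min (min (‖y - midpoint ℝ a e‖ ^ 2) (‖y + midpoint ℝ a e‖ ^ 2)) ⟪a, e⟫ ≤ 0 := by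
    linarith [half_norm_sub_sq_add_le_min_add_min a e y]
  rcases min_le_iff.1 hmin with hmin | hmin
  · rcases min_le_iff.1 hmin with h₁ | h₁
    · exact .inl (sub_eq_zero.1 (norm_eq_zero.1 (pow_eq_zero_iff two_ne_zero |>.1
        (le_antisymm h₁ (sq_nonneg _)))))
    · exact .inr (eq_neg_of_add_eq_zero_left (norm_eq_zero.1 (pow_eq_zero_iff two_ne_zero |>.1
        (le_antisymm h₁ (sq_nonneg _)))))
  · linarith

end InnerProduct

section Antipodal

variable {E : Type*} [NormedAddCommGroup E] [MeasurableSpace E]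

def antipodalMeasure (x : E) : Measure E := twoPoint x (-x)

instance (x : E) : IsProbabilityMeasure (antipodalMeasure x) := by
  rw [antipodalMeasure]
  infer_instance

theorem antipodalMeasure_neg (x : E) : antipodalMeasure (-x) = antipodalMeasure x := by
  rw [antipodalMeasure, neg_neg, twoPoint_comm, antipodalMeasure]

theorem ae_antipodalMeasure [MeasurableSingletonClass E] (x : E) :
    ∀ᵐ z ∂antipodalMeasure x, z = x ∨ z = -x :=
  ae_twoPoint x (-x)

variable [BorelSpace E] [SecondCountableTopology E]

theorem integral_min_le_W2_sq_twoPoint {μ : Measure E} [IsProbabilityMeasure μ] {K : Set E}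
    (hK : IsCompact K) (hμ : ∀ᵐ y ∂μ, y ∈ K) (a b : E) :
    ∫ y, min (‖a - y‖ ^ 2) (‖b - y‖ ^ 2) ∂μ ≤ W2 (twoPoint a b) μ ^ 2 := by
  have hψ : Continuous fun y : E => min (‖a - y‖ ^ 2) (‖b - y‖ ^ 2) := by fun_prop
  simpa using integral_add_integral_le_W2_sq (Set.toFinite {a, b}).isCompact hK
    (ae_twoPoint a b) hμ (integrable_zero _ _ _) (hψ.integrable_of_ae_mem_isCompact hK hμ)
    (by rintro x (rfl | rfl) y - <;> simp)

variable [InnerProductSpace ℝ E]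

theorem norm_sub_sq_add_mul_abs_le_W2_sq {a m : E} (ham : 0 < ⟪a, m⟫) {μ : Measure E}
    [IsProbabilityMeasure μ] (hμ : ∀ᵐ y ∂μ, y = m ∨ y = -m) :
    ‖a - m‖ ^ 2 + 4 * ⟪a, m⟫ * |μ.real {m} - 1 / 2| ≤ W2 (antipodalMeasure a) μ ^ 2 := by
  classical
  have ha : a ≠ -a := ne_neg_of_inner_pos (by rwa [real_inner_comm])
  have hm : m ≠ -m := ne_neg_of_inner_pos ham
  have ht := measureReal_add_measureReal_of_ae_eq_or_eq hm hμ
  -- admissible potentials for `|δ| ≤ 2 ⟪a, m⟫`, as `‖a + m‖² = ‖a - m‖² + 4 ⟪a, m⟫`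
  have key : ∀ δ, |δ| ≤ 2 * ⟪a, m⟫ →
      ‖a - m‖ ^ 2 + δ * (2 * μ.real {m} - 1) ≤ W2 (antipodalMeasure a) μ ^ 2 := by
    intro δ hδ
    rw [antipodalMeasure]
    set k := ‖a - m‖ ^ 2
    have h := integral_add_integral_le_W2_sq (Set.toFinite {a, -a}).isCompact
      (Set.toFinite {m, -m}).isCompact (ae_twoPoint a (-a)) hμ
      (integrable_of_ae_eq_or_eq ha (ae_twoPoint a (-a)) fun x => if x = a then -δ else δ)
      (integrable_of_ae_eq_or_eq hm hμ fun y => if y = m then k + δ else k - δ) ?_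
    · rw [integral_twoPoint (measurableSet_singleton _)
        (measurableSet_singleton _), integral_of_ae_eq_or_eq hm hμ] at h
      simp only [↓reduceIte, if_neg ha.symm, if_neg hm.symm] at h
      rw [show μ.real {-m} = 1 - μ.real {m} by linarith] at h
      linear_combination h
    · have hk : ∀ x y : E, ‖x - y‖ ^ 2 = ‖x‖ ^ 2 - 2 * ⟪x, y⟫ + ‖y‖ ^ 2 := norm_sub_sq_real
      have habs := abs_le.1 hδ
      rintro x (rfl | rfl) y (rfl | rfl) <;>
      simp only [↓reduceIte, if_neg ha.symm, if_neg hm.symm, k, hk, inner_neg_left,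
        inner_neg_right, norm_neg] <;> linarith
  rcases le_total (μ.real {m}) (1 / 2) with h | h
  · rw [abs_of_nonpos (by linarith)]
    linarith [key (-(2 * ⟪a, m⟫)) (by rw [abs_neg, abs_of_pos (by linarith)])]
  · rw [abs_of_nonneg (by linarith)]
    linarith [key (2 * ⟪a, m⟫) (by rw [abs_of_pos (by linarith)])]

theorem W2_antipodalMeasure {x y : E} (hxy : 0 < ⟪x, y⟫) :
    W2 (antipodalMeasure x) (antipodalMeasure y) = ‖x - y‖ := by
  have hhalf : (antipodalMeasure y).real {y} = 1 / 2 := by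
    simp [measureReal_def, antipodalMeasure, twoPoint_apply_self (ne_neg_of_inner_pos hxy)]
  have hlow := norm_sub_sq_add_mul_abs_le_W2_sq hxy (ae_antipodalMeasure y)
  have hup : W2 (antipodalMeasure x) (antipodalMeasure y) ^ 2 ≤ _ :=
    W2_sq_twoPoint_le x (-x) y (-y)
  rw [hhalf, sub_self, abs_zero, mul_zero, add_zero] at hlow
  rw [neg_sub_neg, norm_sub_rev y x, add_self_div_two] at hup
  exact (sq_eq_sq₀ (W2_nonneg _ _) (norm_nonneg _)).1 (le_antisymm hup hlow)


theorem ae_eq_midpoint_or_eq_neg_of_W2_sq_add_le {a e : E} (hae : 0 < ⟪a, e⟫) {μ : Measure E}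
    [IsProbabilityMeasure μ] {K : Set E} (hK : IsCompact K) (hμ : ∀ᵐ y ∂μ, y ∈ K)
    (h : W2 (antipodalMeasure a) μ ^ 2 + W2 (antipodalMeasure e) μ ^ 2 ≤ ‖a - e‖ ^ 2 / 2) :
    ∀ᵐ y ∂μ, y = midpoint ℝ a e ∨ y = -midpoint ℝ a e := by
  have hint : ∀ x : E, Integrable (fun y => min (‖x - y‖ ^ 2) (‖-x - y‖ ^ 2)) μ := fun x =>
    Continuous.integrable_of_ae_mem_isCompact hK hμ (by fun_prop)
  have hlow : ∀ x : E,
      ∫ y, min (‖x - y‖ ^ 2) (‖-x - y‖ ^ 2) ∂μ ≤ W2 (antipodalMeasure x) μ ^ 2 := fun x =>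
    integral_min_le_W2_sq_twoPoint hK hμ x (-x)
  set g : E → ℝ := fun y => min (‖a - y‖ ^ 2) (‖-a - y‖ ^ 2) + min (‖e - y‖ ^ 2) (‖-e - y‖ ^ 2)
  have hge : ∀ y, ‖a - e‖ ^ 2 / 2 ≤ g y := fun y => by
    have := le_min (le_min (sq_nonneg ‖y - midpoint ℝ a e‖) (sq_nonneg ‖y + midpoint ℝ a e‖))
      hae.le
    linarith [half_norm_sub_sq_add_le_min_add_min a e y]
  have hle : ∫ y, g y ∂μ ≤ ‖a - e‖ ^ 2 / 2 := by
    rw [integral_add (hint a) (hint e)]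
    linarith [hlow a, hlow e]
  have hg : (fun _ => ‖a - e‖ ^ 2 / 2) =ᵐ[μ] g := by
    refine (integral_eq_iff_of_ae_le (integrable_const _) ((hint a).add (hint e))
      (ae_of_all _ hge)).1 (le_antisymm (integral_mono (integrable_const _)
        ((hint a).add (hint e)) hge) ?_)
    rwa [integral_const, probReal_univ, one_smul]
  filter_upwards [hg] with y hy using eq_midpoint_or_eq_neg_of_min_add_min_le hae hy.symm.le

theorem eq_antipodalMeasure_midpoint_of_W2_sq_add_le {a e : E} (hae : 0 < ⟪a, e⟫)
    {μ : Measure E} [IsProbabilityMeasure μ] {K : Set E} (hK : IsCompact K)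
    (hμ : ∀ᵐ y ∂μ, y ∈ K)
    (h : W2 (antipodalMeasure a) μ ^ 2 + W2 (antipodalMeasure e) μ ^ 2 ≤ ‖a - e‖ ^ 2 / 2) :
    μ = antipodalMeasure (midpoint ℝ a e) := by
  set m := midpoint ℝ a e
  have hconc := ae_eq_midpoint_or_eq_neg_of_W2_sq_add_le hae hK hμ h
  have ham := inner_midpoint_pos_left hae
  have hem := inner_midpoint_pos_right hae
  have ht : |μ.real {m} - 1 / 2| = 0 := by
    nlinarith [norm_sub_sq_add_mul_abs_le_W2_sq ham hconc,
      norm_sub_sq_add_mul_abs_le_W2_sq hem hconc, norm_sub_midpoint_sq_add_norm_sub_midpoint_sq a e,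
      abs_nonneg (μ.real {m} - 1 / 2)]
  exact eq_twoPoint_of_ae_eq_or_eq (ne_neg_of_inner_pos ham) hconc
    (by linarith [abs_eq_zero.1 ht])

end Antipodal

theorem IsBary.eq_antipodalMeasure_midpoint {d : ℕ} {Ω : Set (Euc d)} (hΩ : IsCompact Ω)
    {a e : Euc d} (hae : 0 < ⟪a, e⟫) (hm : midpoint ℝ a e ∈ Ω) (hm' : -midpoint ℝ a e ∈ Ω)
    {μ : Measure (Euc d)} (h : IsBary Ω (twoPoint (antipodalMeasure a) (antipodalMeasure e)) μ) :
    μ = antipodalMeasure (midpoint ℝ a e) := by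
  obtain ⟨⟨hμ, hμΩ⟩, hmin⟩ := h
  have hadm : ProbOn Ω (antipodalMeasure (midpoint ℝ a e)) := ⟨inferInstance,
    ae_iff.1 ((ae_antipodalMeasure _).mono (by rintro y (rfl | rfl) <;> assumption))⟩
  refine eq_antipodalMeasure_midpoint_of_W2_sq_add_le hae hΩ (ae_iff.2 hμΩ) ?_
  have := hmin _ hadm
  rw [Fvar_twoPoint, Fvar_twoPoint, W2_antipodalMeasure (inner_midpoint_pos_left hae),
    W2_antipodalMeasure (inner_midpoint_pos_right hae)] at this
  linarith [norm_sub_midpoint_sq_add_norm_sub_midpoint_sq a e]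

section Plane

theorem neg_pt (a b : ℝ) : -pt a b = pt (-a) (-b) := by
  ext i; fin_cases i <;> rfl

theorem pt_sub_pt (a b c d : ℝ) : pt a b - pt c d = pt (a - c) (b - d) := by
  ext i; fin_cases i <;> rfl

theorem inner_pt_pt (a b c d : ℝ) : ⟪pt a b, pt c d⟫ = a * c + b * d := by
  simp only [pt, PiLp.continuousLinearEquiv_symm_apply, PiLp.inner_apply, RCLike.inner_apply,
    Real.ringHom_apply, Fin.sum_univ_two, Matrix.cons_val_zero, Matrix.cons_val_one,
    Matrix.cons_val_fin_one]
  ring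

theorem norm_pt_sq (a b : ℝ) : ‖pt a b‖ ^ 2 = a ^ 2 + b ^ 2 := by
  rw [← real_inner_self_eq_norm_sq, inner_pt_pt]
  ring

theorem norm_pt (a b : ℝ) : ‖pt a b‖ = √(a ^ 2 + b ^ 2) := by
  rw [← norm_pt_sq, Real.sqrt_sq (norm_nonneg _)]

theorem midpoint_pt_pt (a b c d : ℝ) :
    midpoint ℝ (pt a b) (pt c d) = pt ((a + c) / 2) ((b + d) / 2) := by
  ext i
  fin_cases i <;>
  simp only [pt, PiLp.continuousLinearEquiv_symm_apply, midpoint_eq_smul_add, invOf_eq_inv,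
    PiLp.add_apply, PiLp.smul_apply, Fin.zero_eta, Fin.mk_one, Matrix.cons_val_zero,
    Matrix.cons_val_one, Matrix.cons_val_fin_one, smul_eq_mul] <;> ring

theorem rho1_eq_antipodalMeasure : rho1 = antipodalMeasure (pt 0 1) := by
  rw [rho1, antipodalMeasure, twoPoint, neg_pt, neg_zero]

theorem rho2_eq_antipodalMeasure (η : ℝ) : rho2 η = antipodalMeasure (pt 1 (η / 2)) := by
  rw [rho2, antipodalMeasure, twoPoint, neg_pt]

theorem rho2_neg_eq_antipodalMeasure (η : ℝ) : rho2 (-η) = antipodalMeasure (pt (-1) (η / 2)) := by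
  rw [rho2_eq_antipodalMeasure, ← antipodalMeasure_neg, neg_pt, neg_div, neg_neg]

theorem Pm_eq_twoPoint (η : ℝ) : Pm η = twoPoint rho1 (rho2 η) := rfl

theorem IsBary.eq_antipodalMeasure_of_sq_eq_one {R ε s : ℝ} (hR : 2 ≤ R) (hε : 0 < ε)
    (hε' : ε ≤ 1 / 2) (hs : s ^ 2 = 1) {μ : Measure (Euc 2)}
    (h : IsBary (closedBall 0 R) (twoPoint rho1 (antipodalMeasure (pt s (ε / 2)))) μ) :
    μ = antipodalMeasure (pt (s / 2) ((1 + ε / 2) / 2)) := by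
  have hmem : ∀ x : Euc 2, ‖x‖ ^ 2 ≤ 4 → x ∈ closedBall (0 : Euc 2) R := fun x hx => by
    rw [mem_closedBall_zero_iff]
    nlinarith [norm_nonneg x]
  rw [rho1_eq_antipodalMeasure] at h
  have hm : ‖midpoint ℝ (pt 0 1) (pt s (ε / 2))‖ ^ 2 ≤ 4 := by
    rw [midpoint_pt_pt, norm_pt_sq]
    nlinarith
  have := h.eq_antipodalMeasure_midpoint (isCompact_closedBall 0 R)
    (by rw [inner_pt_pt]; linarith) (hmem _ hm) (hmem _ (by rwa [norm_neg]))
  rwa [midpoint_pt_pt, zero_add] at this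

end Plane

/-- **No quantitative stability without regularity (Figure 1).**
For `0 < ε ≤ ½`, any barycenters of `P_ε` and `P_{-ε}` are at `W₂`-distance
exactly `1`, although `𝒲₁(P_ε, P_{-ε}) ≤ ε`. -/
theorem no_stability_discrete_example
    (R : ℝ) (hR : 2 ≤ R) (ε : ℝ) (hε : 0 < ε) (hε' : ε ≤ 1 / 2)
    (μ₁ μ₂ : Measure (Euc 2))
    (h₁ : IsBary (closedBall (0 : Euc 2) R) (Pm ε) μ₁)
    (h₂ : IsBary (closedBall (0 : Euc 2) R) (Pm (-ε)) μ₂) :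
    W2 μ₁ μ₂ = 1 ∧ Wc1 (Pm ε) (Pm (-ε)) ≤ ε := by
  rw [Pm_eq_twoPoint, rho2_eq_antipodalMeasure] at h₁
  rw [Pm_eq_twoPoint, rho2_neg_eq_antipodalMeasure] at h₂
  refine ⟨?_, ?_⟩
  · rw [h₁.eq_antipodalMeasure_of_sq_eq_one hR hε hε' (one_pow 2),
      h₂.eq_antipodalMeasure_of_sq_eq_one hR hε hε' (by norm_num),
      W2_antipodalMeasure (by rw [inner_pt_pt]; nlinarith), pt_sub_pt, norm_pt]
    norm_num
  · rw [Pm_eq_twoPoint, Pm_eq_twoPoint, rho2_eq_antipodalMeasure, rho2_eq_antipodalMeasure,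
      rho1_eq_antipodalMeasure]
    refine (Wc1_twoPoint_le _ _ _ _).trans ?_
    rw [W2_antipodalMeasure (by rw [inner_pt_pt]; norm_num),
      W2_antipodalMeasure (by rw [inner_pt_pt]; nlinarith), sub_self, norm_zero, pt_sub_pt,
      sub_self, show ε / 2 - -ε / 2 = ε by ring, norm_pt, zero_pow two_ne_zero, zero_add,
      zero_add, Real.sqrt_sq hε.le]
    linarith
end
end

section
/- Let ρ be a Borel probability measure on a compact set X ⊂ ℝ^d, let C_1, …, C_N be Borel sets with X ⊂ ⋃_{i=1}^N C_i and ρ(C_i) > 0 for each i, and let f ∈ L²(ρ). For each i set ρ_i = ρ(C_i)^{-1}·ρ|_{C_i} and m_i = ∫ f dρ_i. Then Var_ρ(f) ≤ (∑_{i=1}^N ρ(C_i)) · ∑_{i=1}^N ρ(C_i)·Var_{ρ_i}(f) + ½·∑_{i=1}^N ∑_{j=1}^N (m_i − m_j)²·ρ(C_i)·ρ(C_j). -/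
noncomputable section

open MeasureTheory Metric Set
open scoped ENNReal NNReal RealInnerProductSpace

/-- The variance of `g` under `μ`. -/
def mvar {α : Type*} [MeasurableSpace α] (μ : Measure α) (g : α → ℝ) : ℝ :=
  (∫ x, g x ^ 2 ∂μ) - (∫ x, g x ∂μ) ^ 2

/-!
For a finite measure `ν` the quantity `ν(1) ν(f²) - ν(f)² = ½ ∬ (f x - f y)² dν dν` is monotone
in `ν`. Since the cells cover `ρ`-almost everything, `ρ ≤ ν := ∑ ρ|_{C_i}`, so
`Var_ρ(f) ≤ ν(1) ν(f²) - ν(f)²`; expanding the latter over the mixture `ν = ∑ ρ(C_i) ρ_i` splits it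
into the within-cell and between-cell terms of the right-hand side.
-/

namespace MeasureTheory

variable {α : Type*} [MeasurableSpace α]

def massVariance (μ : Measure α) (f : α → ℝ) : ℝ :=
  μ.real univ * ∫ x, f x ^ 2 ∂μ - (∫ x, f x ∂μ) ^ 2

lemma massVariance_eq_mvar (μ : Measure α) [IsProbabilityMeasure μ] (f : α → ℝ) :
    massVariance μ f = mvar μ f := by
  simp [massVariance, mvar]

lemma integral_eq_measureReal_univ_mul_integral_inv_smul (μ : Measure α) [IsFiniteMeasure μ]
    (g : α → ℝ) : ∫ x, g x ∂μ = μ.real univ * ∫ x, g x ∂((μ univ)⁻¹ • μ) := by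
  rcases eq_zero_or_neZero μ with rfl | hμ
  · simp
  rw [integral_smul_measure, ENNReal.toReal_inv, smul_eq_mul, ← measureReal_def,
    mul_inv_cancel_left₀ measureReal_univ_ne_zero]

lemma massVariance_nonneg {μ : Measure α} [IsFiniteMeasure μ] {f : α → ℝ} (hf : MemLp f 2 μ) :
    0 ≤ massVariance μ f := by
  rcases eq_zero_or_neZero μ with rfl | hμ
  · simp [massVariance]
  have hvar := ProbabilityTheory.variance_nonneg f ((μ univ)⁻¹ • μ)
  rw [ProbabilityTheory.variance_eq_sub (hf.smul_measure (by simpa using hμ.out))] at hvar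
  simp only [Pi.pow_apply] at hvar
  rw [massVariance, integral_eq_measureReal_univ_mul_integral_inv_smul μ,
    integral_eq_measureReal_univ_mul_integral_inv_smul μ f]
  nlinarith [mul_nonneg (sq_nonneg (μ.real univ)) hvar]

lemma massVariance_add_massVariance_le {μ ν : Measure α} [IsFiniteMeasure μ]
    [IsFiniteMeasure ν] {f : α → ℝ} (hμ : MemLp f 2 μ) (hν : MemLp f 2 ν) :
    massVariance μ f + massVariance ν f ≤ massVariance (μ + ν) f := by
  have hcs_μ := massVariance_nonneg hμ
  have hcs_ν := massVariance_nonneg hν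
  simp only [massVariance] at hcs_μ hcs_ν ⊢
  rw [measureReal_add_apply, integral_add_measure (hμ.integrable one_le_two)
      (hν.integrable one_le_two), integral_add_measure hμ.integrable_sq hν.integrable_sq]
  set A := μ.real univ
  set B := ν.real univ
  set P := ∫ x, f x ^ 2 ∂μ
  set Q := ∫ x, f x ^ 2 ∂ν
  set M := ∫ x, f x ∂μ
  set L := ∫ x, f x ∂ν
  have hA : 0 ≤ A := measureReal_nonneg
  have hB : 0 ≤ B := measureReal_nonneg
  have hP : 0 ≤ P := integral_nonneg fun x => sq_nonneg _
  have hQ : 0 ≤ Q := integral_nonneg fun x => sq_nonneg _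
  -- `(M L)² ≤ (A Q) (B P) ≤ ((A Q + B P) / 2)²`
  have hcross : (2 * (M * L)) ^ 2 ≤ (A * Q + B * P) ^ 2 := by
    nlinarith [mul_le_mul (by linarith : M ^ 2 ≤ A * P) (by linarith : L ^ 2 ≤ B * Q)
      (sq_nonneg L) (mul_nonneg hA hP), sq_nonneg (A * Q - B * P)]
  nlinarith [(abs_le_of_sq_le_sq' hcross (by positivity)).2]

lemma massVariance_mono {μ ν : Measure α} [IsFiniteMeasure ν] (hμν : μ ≤ ν) {f : α → ℝ}
    (hf : MemLp f 2 ν) : massVariance μ f ≤ massVariance ν f := by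
  have : IsFiniteMeasure μ := isFiniteMeasure_of_le ν hμν
  have hsplit : ν = μ + (ν - μ) := by rw [add_comm, Measure.sub_add_cancel_of_le hμν]
  have hμ : MemLp f 2 μ := hf.mono_measure hμν
  have hrest : MemLp f 2 (ν - μ) := hf.mono_measure Measure.sub_le
  calc massVariance μ f ≤ massVariance μ f + massVariance (ν - μ) f :=
        le_add_of_nonneg_right (massVariance_nonneg hrest)
    _ ≤ massVariance (μ + (ν - μ)) f := massVariance_add_massVariance_le hμ hrest
    _ = massVariance ν f := by rw [← hsplit]

lemma sum_mul_sum_sub_sq_eq {ι : Type*} [Fintype ι] (a m q : ι → ℝ) :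
    (∑ i, a i) * (∑ i, a i * q i) - (∑ i, a i * m i) ^ 2 =
      (∑ i, a i) * ∑ i, a i * (q i - m i ^ 2) +
        1 / 2 * ∑ i, ∑ j, (m i - m j) ^ 2 * a i * a j := by
  have hexpand : ∀ i j, (m i - m j) ^ 2 * a i * a j =
      a i * m i ^ 2 * a j + a i * (a j * m j ^ 2) - 2 * (a i * m i) * (a j * m j) := by
    intros; ring
  simp only [hexpand, Finset.sum_sub_distrib, Finset.sum_add_distrib, ← Finset.sum_mul,
    ← Finset.mul_sum, mul_sub]
  ring

lemma massVariance_finset_sum_eq {ι : Type*} [Fintype ι] (μ : ι → Measure α)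
    [∀ i, IsFiniteMeasure (μ i)] {f : α → ℝ} (hf : ∀ i, MemLp f 2 (μ i)) :
    massVariance (∑ i, μ i) f =
      (∑ i, (μ i univ).toReal) * ∑ i, (μ i univ).toReal * mvar ((μ i univ)⁻¹ • μ i) f +
        1 / 2 * ∑ i, ∑ j,
          ((∫ x, f x ∂((μ i univ)⁻¹ • μ i)) - ∫ x, f x ∂((μ j univ)⁻¹ • μ j)) ^ 2 *
            (μ i univ).toReal * (μ j univ).toReal := by
  have hsum_integral (g : α → ℝ) : ∑ i, ∫ x, g x ∂μ i =
      ∑ i, (μ i univ).toReal * ∫ x, g x ∂((μ i univ)⁻¹ • μ i) :=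
    Finset.sum_congr rfl fun i _ => integral_eq_measureReal_univ_mul_integral_inv_smul (μ i) g
  rw [massVariance, integral_finsetSum_measure fun i _ => (hf i).integrable one_le_two,
    integral_finsetSum_measure fun i _ => (hf i).integrable_sq, hsum_integral, hsum_integral,
    measureReal_def, Measure.coe_finsetSum, Finset.sum_apply,
    ENNReal.toReal_sum fun i _ => measure_ne_top _ _]
  exact sum_mul_sum_sub_sq_eq _ _ _

end MeasureTheory

theorem variance_decomposition_cells_general
    (d : ℕ) (X : Set (Euc d))
    (ρ : Measure (Euc d)) (hρ : IsProbabilityMeasure ρ) (hρX : ρ Xᶜ = 0)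
    (N : ℕ) (C : Fin N → Set (Euc d))
    (hcover : X ⊆ ⋃ i, C i)
    (f : Euc d → ℝ) (hf : MemLp f 2 ρ) :
    mvar ρ f ≤
      (∑ i, (ρ (C i)).toReal) *
          ∑ i, (ρ (C i)).toReal * mvar ((ρ (C i))⁻¹ • ρ.restrict (C i)) f +
        (1 / 2) *
          ∑ i, ∑ j,
            ((∫ x, f x ∂((ρ (C i))⁻¹ • ρ.restrict (C i))) -
                ∫ x, f x ∂((ρ (C j))⁻¹ • ρ.restrict (C j))) ^ 2 *
              (ρ (C i)).toReal * (ρ (C j)).toReal := by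
  have hle : ρ ≤ ∑ i, ρ.restrict (C i) := calc
    ρ = ρ.restrict (⋃ i, C i) := (Measure.restrict_eq_self_of_ae_mem
      (mem_ae_iff.2 (measure_mono_null (compl_subset_compl.2 hcover) hρX))).symm
    _ ≤ Measure.sum fun i => ρ.restrict (C i) := Measure.restrict_iUnion_le
    _ = ∑ i, ρ.restrict (C i) := Measure.sum_fintype _
  have hsum_le : ∑ i, ρ.restrict (C i) ≤ (N : ℝ≥0∞) • ρ := calc
    ∑ i, ρ.restrict (C i) ≤ ∑ _i : Fin N, ρ :=
        Finset.sum_le_sum fun i _ => Measure.restrict_le_self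
    _ = (N : ℝ≥0∞) • ρ := by simp [Nat.cast_smul_eq_nsmul]
  calc mvar ρ f = massVariance ρ f := (massVariance_eq_mvar ρ f).symm
    _ ≤ massVariance (∑ i, ρ.restrict (C i)) f :=
        massVariance_mono hle (hf.of_measure_le_smul (by simp) hsum_le)
    _ = _ := by
        simpa only [Measure.restrict_apply_univ] using
          massVariance_finset_sum_eq (fun i => ρ.restrict (C i)) fun i => hf.restrict (C i)

/-- **Variance decomposition over a covering by cells.**
For a probability measure `ρ` on a compact set `X ⊆ ⋃ C_i` with `ρ(C_i) > 0`
and `f ∈ L²(ρ)`, writing `ρ_i` for the normalized restriction of `ρ` to `C_i`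
and `m_i = ∫ f dρ_i`:
`Var_ρ(f) ≤ (∑ ρ(C_i)) ∑ ρ(C_i) Var_{ρ_i}(f) + ½ ∑_{i,j} (m_i - m_j)² ρ(C_i) ρ(C_j)`. -/
theorem variance_decomposition_cells
    (d : ℕ) (X : Set (Euc d)) (hX : IsCompact X)
    (ρ : Measure (Euc d)) (hρ : IsProbabilityMeasure ρ) (hρX : ρ Xᶜ = 0)
    (N : ℕ) (C : Fin N → Set (Euc d)) (hCm : ∀ i, MeasurableSet (C i))
    (hcover : X ⊆ ⋃ i, C i) (hpos : ∀ i, 0 < ρ (C i))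
    (f : Euc d → ℝ) (hf : MemLp f 2 ρ) :
    mvar ρ f ≤
      (∑ i, (ρ (C i)).toReal) *
          ∑ i, (ρ (C i)).toReal * mvar ((ρ (C i))⁻¹ • ρ.restrict (C i)) f +
        (1 / 2) *
          ∑ i, ∑ j,
            ((∫ x, f x ∂((ρ (C i))⁻¹ • ρ.restrict (C i))) -
                ∫ x, f x ∂((ρ (C j))⁻¹ • ρ.restrict (C j))) ^ 2 *
              (ρ (C i)).toReal * (ρ (C j)).toReal :=
  variance_decomposition_cells_general d X ρ hρ hρX N C hcover f hf
end
end
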